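/- For any distribution π on {s1, ..., n - s0} satisfying πQ = 0 with Σ π_k = 1 (where Q is the rate matrix of the voter model birth-and-death chain with stubborn nodes, s0 > 0 and s1 > 0), the expectation satisfies Σ_k k·π_k = n·s1/(s0 + s1). -/

import Mathlib

noncomputable def deathRate (n s1 k : ℕ) : ℝ :=
  ((k : ℝ) - s1) * ((n : ℝ) - k) / ((n : ℝ) - 1)

noncomputable def birthRate (n s0 k : ℕ) : ℝ :=
  (k : ℝ) * ((n : ℝ) - k - s0) / ((n : ℝ) - 1)

noncomputable def Qmat (n s0 s1 : ℕ) (k j : ℕ) : ℝ :=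
  if j + 1 = k then deathRate n s1 k
  else if j = k + 1 then birthRate n s0 k
  else if j = k then -(deathRate n s1 k + birthRate n s0 k)
  else 0

/-!
Apply the generator to the coordinate function `f l = l`. Since the chain moves by `±1`,
`(Q f) k = birthRate k - deathRate k = (s1 * n - (s0 + s1) * k) / (n - 1)` is affine in `k`,
and stationarity gives `∑ π k * (Q f) k = (π Q) f = 0`. Taking the mean of the affine drift
with `∑ π k = 1` yields `s1 * n - (s0 + s1) * E[k] = 0`.
-/

open Finset

theorem sum_mul_sum_eq_zero_of_forall_sum_mul_eq_zero {ι : Type*} (S : Finset ι)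
    (π f : ι → ℝ) (Q : ι → ι → ℝ) (hstat : ∀ l ∈ S, ∑ k ∈ S, π k * Q k l = 0) :
    ∑ k ∈ S, π k * ∑ l ∈ S, Q k l * f l = 0 := by
  simp_rw [mul_sum]
  rw [sum_comm]
  refine sum_eq_zero fun l hl => ?_
  simp_rw [← mul_assoc, ← sum_mul, hstat l hl, zero_mul]

section BirthDeath

variable {n s0 s1 k l : ℕ}

theorem Qmat_of_far (h₁ : l + 1 ≠ k) (h₂ : l ≠ k + 1) (h₃ : l ≠ k) : Qmat n s0 s1 k l = 0 := by
  simp [Qmat, h₁, h₂, h₃]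

theorem Qmat_pred (hk : 1 ≤ k) : Qmat n s0 s1 k (k - 1) = deathRate n s1 k := by
  rw [Qmat, if_pos (by omega)]

theorem Qmat_succ : Qmat n s0 s1 k (k + 1) = birthRate n s0 k := by
  rw [Qmat, if_neg (by omega), if_pos rfl]

theorem Qmat_self : Qmat n s0 s1 k k = -(deathRate n s1 k + birthRate n s0 k) := by
  rw [Qmat, if_neg (by omega), if_neg (by omega), if_pos rfl]

theorem deathRate_self : deathRate n s1 s1 = 0 := by
  simp [deathRate]

theorem birthRate_sub_self (h : s0 ≤ n) : birthRate n s0 (n - s0) = 0 := by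
  simp [birthRate, Nat.cast_sub h]

theorem birthRate_sub_deathRate :
    birthRate n s0 k - deathRate n s1 k = ((s1 : ℝ) * n - (s0 + s1) * k) / (n - 1) := by
  rw [birthRate, deathRate, ← sub_div]
  ring

/-- At the ends of the state space the rate towards the missing neighbour vanishes, so the
truncated sum agrees with the full three-term generator. -/
theorem sum_Icc_Qmat_mul (h1 : 0 < s1) (hk : k ∈ Icc s1 (n - s0)) (f : ℕ → ℝ) :
    ∑ l ∈ Icc s1 (n - s0), Qmat n s0 s1 k l * f l
      = deathRate n s1 k * (f (k - 1) - f k) + birthRate n s0 k * (f (k + 1) - f k) := by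
  rw [mem_Icc] at hk
  set g := fun l => Qmat n s0 s1 k l * f l
  have hS : ∑ l ∈ Icc s1 (n - s0), g l = ∑ l ∈ Icc s1 (n - s0) ∪ {k - 1, k, k + 1}, g l := by
    refine sum_subset subset_union_left fun l hl hlS => ?_
    simp only [mem_union, mem_Icc, mem_insert, mem_singleton] at hl hlS
    rcases hl with hl | rfl | rfl | rfl
    · exact absurd hl hlS
    · obtain rfl : k = s1 := by omega
      simp [g, Qmat_pred h1, deathRate_self]
    · omega
    · obtain rfl : k = n - s0 := by omega
      simp [g, Qmat_succ, birthRate_sub_self (by omega : s0 ≤ n)]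
  have hband : ∑ l ∈ ({k - 1, k, k + 1} : Finset ℕ), g l
      = ∑ l ∈ Icc s1 (n - s0) ∪ {k - 1, k, k + 1}, g l := by
    refine sum_subset subset_union_right fun l _ hl => ?_
    simp only [mem_insert, mem_singleton, not_or] at hl
    simp only [g, Qmat_of_far (by omega) (by omega) hl.2.1, zero_mul]
  rw [hS, ← hband, sum_insert (by simp; omega), sum_insert (by simp), sum_singleton]
  simp only [g, Qmat_pred (h1.trans_le hk.1), Qmat_self, Qmat_succ]
  ring

theorem sum_Icc_Qmat_mul_natCast (h1 : 0 < s1) (hk : k ∈ Icc s1 (n - s0)) :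
    ∑ l ∈ Icc s1 (n - s0), Qmat n s0 s1 k l * l = ((s1 : ℝ) * n - (s0 + s1) * k) / (n - 1) := by
  rw [sum_Icc_Qmat_mul h1 hk, ← birthRate_sub_deathRate]
  push_cast [Nat.cast_sub (h1.trans_le (mem_Icc.1 hk).1)]
  ring

end BirthDeath

theorem stationary_mean_general (n s0 s1 : ℕ) (hn : 2 ≤ n)
    (h1 : 0 < s1)
    (π : ℕ → ℝ)
    (hnorm : ∑ k ∈ Finset.Icc s1 (n - s0), π k = 1)
    (hstat : ∀ l ∈ Finset.Icc s1 (n - s0),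
      ∑ k ∈ Finset.Icc s1 (n - s0), π k * Qmat n s0 s1 k l = 0) :
    ∑ k ∈ Finset.Icc s1 (n - s0), (k : ℝ) * π k = n * s1 / (s0 + s1) := by
  have hn1 : (n : ℝ) - 1 ≠ 0 := by
    have : (2 : ℝ) ≤ n := by exact_mod_cast hn
    linarith
  have hbalance :
      ∑ k ∈ Icc s1 (n - s0), π k * (((s1 : ℝ) * n - (s0 + s1) * k) / (n - 1)) = 0 := by
    rw [← sum_mul_sum_eq_zero_of_forall_sum_mul_eq_zero _ π (fun l => (l : ℝ)) _ hstat]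
    exact sum_congr rfl fun k hk => by rw [sum_Icc_Qmat_mul_natCast h1 hk]
  have hexpand : ∑ k ∈ Icc s1 (n - s0), π k * (((s1 : ℝ) * n - (s0 + s1) * k) / (n - 1))
      = (s1 * n * ∑ k ∈ Icc s1 (n - s0), π k
          - (s0 + s1) * ∑ k ∈ Icc s1 (n - s0), (k : ℝ) * π k) / (n - 1) := by
    rw [mul_sum, mul_sum, ← sum_sub_distrib, sum_div]
    exact sum_congr rfl fun _ _ => by ring
  rw [hexpand, hnorm, div_eq_zero_iff, or_iff_left hn1] at hbalance
  have hs : (s0 : ℝ) + s1 ≠ 0 := by positivity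
  field_simp
  linarith

/-- Any stationary distribution `π` of the voter model birth-and-death chain
with stubborn nodes (`s0, s1 > 0`) has mean `n·s1/(s0 + s1)`. -/
theorem stationary_mean (n s0 s1 : ℕ) (hn : 2 ≤ n)
    (h0 : 0 < s0) (h1 : 0 < s1) (hle : s0 + s1 ≤ n)
    (π : ℕ → ℝ) (hnonneg : ∀ k ∈ Finset.Icc s1 (n - s0), 0 ≤ π k)
    (hnorm : ∑ k ∈ Finset.Icc s1 (n - s0), π k = 1)
    (hstat : ∀ l ∈ Finset.Icc s1 (n - s0),
      ∑ k ∈ Finset.Icc s1 (n - s0), π k * Qmat n s0 s1 k l = 0) :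
    ∑ k ∈ Finset.Icc s1 (n - s0), (k : ℝ) * π k = n * s1 / (s0 + s1) :=
  stationary_mean_general n s0 s1 hn h1 π hnorm hstat
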